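/- Let G189 be the graph on 6 vertices with edges {12,13,14,23,25,26,35,36,45,46} (K₄ minus an edge on {1,2,3} with pendular structure as described). Then there is no real symmetric orthogonal matrix in S(G189); consequently q(G189)≥3. -/

import Mathlib

open Matrix

/-- `S(G)`: real symmetric matrices whose off-diagonal nonzero pattern is the edge set of `G`. -/
def inS {V : Type*} (G : SimpleGraph V) (A : Matrix V V ℝ) : Prop :=
  A.IsSymm ∧ ∀ i j, i ≠ j → (A i j ≠ 0 ↔ G.Adj i j)

/-- `q(G)`: the minimum number of distinct eigenvalues among matrices in `S(G)`. -/
noncomputable def qGraph {V : Type*} [Fintype V] [DecidableEq V] (G : SimpleGraph V) : ℕ :=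
  sInf {k : ℕ | ∃ A : Matrix V V ℝ, inS G A ∧ (spectrum ℝ A).ncard = k}

/-- The graph G189 on 6 vertices with edges 12,13,14,23,25,26,35,36,45,46 (1-indexed). -/
def graph189 : SimpleGraph (Fin 6) :=
  SimpleGraph.fromRel (fun i j => (i, j) ∈
    ([(0,1),(0,2),(0,3),(1,2),(1,4),(1,5),(2,4),(2,5),(3,4),(3,5)] : List (Fin 6 × Fin 6)))

/-!
If `A ∈ S(G)` has at most two eigenvalues `l, m`, the functional calculus gives
`(A - l)(A - m) = 0`. For `l = m` the symmetric matrix `A - l` squares to zero, so `A` is scalar,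
which is impossible when `G` has an edge; for `l ≠ m` the rescaling `(2A - (l + m)) / (l - m)`
is a symmetric orthogonal matrix in `S(G)`. Hence `q(G) ≥ 3` as soon as `S(G)` contains no `M`
with `M² = I`.

For `G189`, write `M` with the entries named as in `graph189Pattern`. The entries `(0,3)`, `(3,4)`,
`(3,5)` of `M² = I` force `d = -a` and `e = f = a`; then `(0,1)`, `(1,4)`, `(1,5)` make `(u, w)` and
`(v, x)` proportional to `(q, r)`, and with `P = q² + r²` the entry `(4,5)` becomes
`P y z (t² + P) = 0`, contradicting `y, z ≠ 0`.
-/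

section CFC
variable {A : Type*} [Ring A] [StarRing A] [Algebra ℝ A] [TopologicalSpace A]
  [ContinuousFunctionalCalculus ℝ A IsSelfAdjoint]

theorem IsSelfAdjoint.mul_sub_algebraMap_eq_zero {a : A} (ha : IsSelfAdjoint a) {l m : ℝ}
    (hlm : spectrum ℝ a ⊆ {l, m}) :
    (a - algebraMap ℝ A l) * (a - algebraMap ℝ A m) = 0 := by
  calc (a - algebraMap ℝ A l) * (a - algebraMap ℝ A m)
      = cfc (fun x => (x - l) * (x - m)) a := by
        rw [cfc_mul (fun x => x - l) (fun x => x - m) a, cfc_sub (fun x => x) (fun _ => l) a,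
          cfc_sub (fun x => x) (fun _ => m) a, cfc_id' ℝ a, cfc_const l a, cfc_const m a]
    _ = cfc (0 : ℝ → ℝ) a := cfc_congr fun x hx => by
        rcases hlm hx with rfl | rfl <;> simp
    _ = 0 := cfc_zero ℝ a
end CFC

theorem mul_self_eq_one_of_mul_sub_algebraMap_eq_zero {K R : Type*} [Field K] [Ring R]
    [Algebra K R] {a : R} {l m : K} (hlm : l ≠ m)
    (h : (a - algebraMap K R l) * (a - algebraMap K R m) = 0) :
    ((2 / (l - m)) • a - algebraMap K R ((l + m) / (l - m))) *
      ((2 / (l - m)) • a - algebraMap K R ((l + m) / (l - m))) = 1 := by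
  have hlm' : l - m ≠ 0 := sub_ne_zero.mpr hlm
  have ha : a * a = (l + m) • a - (l * m) • 1 := by
    rw [Algebra.algebraMap_eq_smul_one, Algebra.algebraMap_eq_smul_one] at h
    simp only [sub_mul, mul_sub, smul_mul_assoc, mul_smul_comm, mul_one, one_mul] at h
    rw [← sub_eq_zero, ← h]; module
  simp only [Algebra.algebraMap_eq_smul_one, sub_mul, mul_sub, smul_mul_assoc, mul_smul_comm,
    mul_one, one_mul, ha]
  match_scalars <;> field_simp <;> ring

theorem Set.exists_subset_pair_of_ncard_le_two {α : Type*} [Nonempty α] {s : Set α}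
    (hs : s.Finite) (h : s.ncard ≤ 2) : ∃ x y, s ⊆ {x, y} := by
  interval_cases hn : s.ncard
  · obtain ⟨x⟩ := ‹Nonempty α›
    exact ⟨x, x, by simp [(Set.ncard_eq_zero hs).mp hn]⟩
  · obtain ⟨x, rfl⟩ := Set.ncard_eq_one.mp hn
    exact ⟨x, x, by simp⟩
  · obtain ⟨x, y, -, rfl⟩ := Set.ncard_eq_two.mp hn
    exact ⟨x, y, subset_rfl⟩

section inS
variable {V : Type*} {G : SimpleGraph V} {A : Matrix V V ℝ}

theorem inS.apply_eq_zero (hA : inS G A) {i j : V} (hij : i ≠ j) (h : ¬ G.Adj i j) :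
    A i j = 0 :=
  not_not.mp fun h' => h ((hA.2 i j hij).mp h')

theorem inS.apply_ne_zero (hA : inS G A) {i j : V} (h : G.Adj i j) : A i j ≠ 0 :=
  (hA.2 i j h.ne).mpr h

theorem inS.isSelfAdjoint (hA : inS G A) : IsSelfAdjoint A :=
  isHermitian_iff_isSymm.mpr hA.1

theorem inS.smul_add_algebraMap [Fintype V] [DecidableEq V] (hA : inS G A) {c : ℝ} (hc : c ≠ 0)
    (d : ℝ) :
    inS G (c • A + algebraMap ℝ (Matrix V V ℝ) d) := by
  refine ⟨(hA.1.smul c).add (isSymm_diagonal _), fun i j hij => ?_⟩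
  rw [← hA.2 i j hij]
  simp [algebraMap_matrix_apply, hij, hc]

theorem inS_adjMatrix [DecidableEq V] [DecidableRel G.Adj] : inS G (G.adjMatrix ℝ) :=
  ⟨G.isSymm_adjMatrix, fun i j _ => by by_cases h : G.Adj i j <;> simp [h]⟩

end inS

theorem le_qGraph {V : Type*} [Fintype V] [DecidableEq V] {G : SimpleGraph V} {k : ℕ}
    (h : ∀ A, inS G A → k ≤ (spectrum ℝ A).ncard) : k ≤ qGraph G := by
  classical
  exact le_csInf ⟨_, _, inS_adjMatrix, rfl⟩ fun _ ⟨A, hA, hk⟩ => hk ▸ h A hA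

theorem three_le_ncard_spectrum_of_inS {V : Type*} [Fintype V] [DecidableEq V]
    {G : SimpleGraph V} {i j : V} (hij : G.Adj i j)
    (hG : ¬ ∃ M : Matrix V V ℝ, inS G M ∧ M * M = 1) {A : Matrix V V ℝ} (hA : inS G A) :
    3 ≤ (spectrum ℝ A).ncard := by
  by_contra! h
  obtain ⟨l, m, hlm⟩ := Set.exists_subset_pair_of_ncard_le_two (Matrix.finite_spectrum A)
    (Nat.le_of_lt_succ h)
  have hsq := hA.isSelfAdjoint.mul_sub_algebraMap_eq_zero hlm
  rcases eq_or_ne l m with rfl | hne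
  · have hB : (A - algebraMap ℝ _ l)ᴴ = A - algebraMap ℝ _ l :=
      hA.isSelfAdjoint.sub (.algebraMap _ (.all l))
    have hAl : A = algebraMap ℝ _ l :=
      sub_eq_zero.mp (conjTranspose_mul_self_eq_zero.mp (by rwa [hB]))
    exact hA.apply_ne_zero hij (by simp [hAl, algebraMap_matrix_apply, hij.ne])
  · refine hG ⟨_, hA.smul_add_algebraMap (div_ne_zero two_ne_zero (sub_ne_zero.mpr hne))
      (-((l + m) / (l - m))), ?_⟩
    simpa [sub_eq_add_neg] using mul_self_eq_one_of_mul_sub_algebraMap_eq_zero hne hsq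

theorem graph189_relations_inconsistent {a b d e f q r s t u v w x y z : ℝ}
    (hr : r ≠ 0) (hs : s ≠ 0) (ht : t ≠ 0) (hy : y ≠ 0) (hz : z ≠ 0)
    (e01 : a * q + q * b + r * s = 0) (e03 : a * t + t * d = 0)
    (e04 : q * u + r * w + t * y = 0) (e05 : q * v + r * x + t * z = 0)
    (e14 : b * u + s * w + u * e = 0) (e15 : b * v + s * x + v * f = 0)
    (e34 : d * y + y * e = 0) (e35 : d * z + z * f = 0)
    (e45 : u * v + w * x + y * z = 0) : False := by
  have hd : a + d = 0 := (mul_eq_zero.mp (by linear_combination e03)).resolve_left ht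
  have he : d + e = 0 := (mul_eq_zero.mp (by linear_combination e34)).resolve_left hy
  have hf : d + f = 0 := (mul_eq_zero.mp (by linear_combination e35)).resolve_left hz
  have hab : a + b ≠ 0 := fun h =>
    mul_ne_zero hr hs (by linear_combination e01 - q * h)
  have hqw : q * w = r * u := mul_left_cancel₀ hab (by
    linear_combination w * e01 - r * e14 + r * u * (he - hd))
  have hqx : q * x = r * v := mul_left_cancel₀ hab (by
    linear_combination x * e01 - r * e15 + r * v * (hf - hd))
  set P := q ^ 2 + r ^ 2
  have hPu : P * u = -(t * y * q) := by linear_combination q * e04 - r * hqw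
  have hPw : P * w = -(t * y * r) := by linear_combination r * e04 + q * hqw
  have hPv : P * v = -(t * z * q) := by linear_combination q * e05 - r * hqx
  have hPx : P * x = -(t * z * r) := by linear_combination r * e05 + q * hqx
  have hP : 0 < P := by positivity
  have : P * (y * z) * (t ^ 2 + P) = 0 := by
    linear_combination P ^ 2 * e45 - P * v * hPu + t * y * q * hPv - P * x * hPw + t * y * r * hPx
  exact (mul_ne_zero (mul_ne_zero hP.ne' (mul_ne_zero hy hz)) (by positivity)) this

def graph189Pattern (a b c d e f q r s t u v w x y z : ℝ) : Matrix (Fin 6) (Fin 6) ℝ :=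
  !![a, q, r, t, 0, 0;
     q, b, s, 0, u, v;
     r, s, c, 0, w, x;
     t, 0, 0, d, y, z;
     0, u, w, y, e, 0;
     0, v, x, z, 0, f]

theorem inS.eq_graph189Pattern {M : Matrix (Fin 6) (Fin 6) ℝ} (hM : inS graph189 M) :
    M = graph189Pattern (M 0 0) (M 1 1) (M 2 2) (M 3 3) (M 4 4) (M 5 5)
      (M 0 1) (M 0 2) (M 1 2) (M 0 3) (M 1 4) (M 1 5) (M 2 4) (M 2 5) (M 3 4) (M 3 5) := by
  ext i j
  fin_cases i <;> fin_cases j <;> simp [graph189Pattern, hM.apply_eq_zero, graph189] <;>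
    exact hM.1.apply _ _

theorem graph189Pattern_mul_self_ne_one {a b c d e f q r s t u v w x y z : ℝ}
    (hr : r ≠ 0) (hs : s ≠ 0) (ht : t ≠ 0) (hy : y ≠ 0) (hz : z ≠ 0) :
    graph189Pattern a b c d e f q r s t u v w x y z *
      graph189Pattern a b c d e f q r s t u v w x y z ≠ 1 := by
  intro h
  have entry (i j : Fin 6) := congrFun (congrFun h i) j
  simp only [graph189Pattern, mul_apply, Fin.sum_univ_six] at entry
  exact graph189_relations_inconsistent hr hs ht hy hz
    (by simpa using entry 0 1) (by simpa using entry 0 3) (by simpa using entry 0 4)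
    (by simpa using entry 0 5) (by simpa using entry 1 4) (by simpa using entry 1 5)
    (by simpa using entry 3 4) (by simpa using entry 3 5) (by simpa using entry 4 5)

theorem not_exists_inS_graph189_mul_self_eq_one :
    ¬ ∃ M : Matrix (Fin 6) (Fin 6) ℝ, inS graph189 M ∧ M * M = 1 := by
  rintro ⟨M, hM, hM2⟩
  rw [hM.eq_graph189Pattern] at hM2
  refine graph189Pattern_mul_self_ne_one ?_ ?_ ?_ ?_ ?_ hM2 <;>
    exact hM.apply_ne_zero (by simp [graph189])

theorem stmt14 :
    (¬ ∃ M : Matrix (Fin 6) (Fin 6) ℝ, inS graph189 M ∧ M * M = 1) ∧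
      3 ≤ qGraph graph189 :=
  ⟨not_exists_inS_graph189_mul_self_eq_one, le_qGraph fun _ hA =>
    three_le_ncard_spectrum_of_inS (i := 0) (j := 1) (by simp [graph189])
      not_exists_inS_graph189_mul_self_eq_one hA⟩
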